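/- A Banach lattice E with property (d) has the dual positive Schur property if and only if the identity operator on E is almost limited. -/

import Mathlib

open Filter Topology Metric Set NormedSpace BoundedContinuousFunction

noncomputable section

/-- The value `|f| x` of the modulus of a functional `f` in the dual of a Banach lattice,
at a positive element `x`, given by the Riesz–Kantorovich formula. -/
def dualAbs {E : Type*} [NormedAddCommGroup E] [Lattice E] [HasSolidNorm E] [IsOrderedAddMonoid E] [NormedSpace ℝ E]
    (f : E →L[ℝ] ℝ) (x : E) : ℝ :=
  sSup {r : ℝ | ∃ z : E, |z| ≤ x ∧ r = |f z|}

/-- Two functionals `f, g` on a Banach lattice are disjoint, i.e. `|f| ⊓ |g| = 0` in the dual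
lattice; by the Riesz–Kantorovich formula this means that for every `x ≥ 0` the infimum of
`|f| y + |g| (x - y)` over `0 ≤ y ≤ x` is `0`. -/
def DualDisjoint {E : Type*} [NormedAddCommGroup E] [Lattice E] [HasSolidNorm E] [IsOrderedAddMonoid E] [NormedSpace ℝ E]
    (f g : E →L[ℝ] ℝ) : Prop :=
  ∀ x : E, 0 ≤ x → ∀ ε : ℝ, 0 < ε →
    ∃ y : E, 0 ≤ y ∧ y ≤ x ∧ dualAbs f y + dualAbs g (x - y) < ε

/-- A sequence of functionals is weak* null if it converges to `0` pointwise. -/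
def WeakStarNull {E : Type*} [NormedAddCommGroup E] [NormedSpace ℝ E]
    (f : ℕ → E →L[ℝ] ℝ) : Prop :=
  ∀ x : E, Tendsto (fun n => f n x) atTop (𝓝 0)

/-- A functional on a Banach lattice is positive if it is nonnegative on the positive cone. -/
def PositiveFunctional {E : Type*} [NormedAddCommGroup E] [Lattice E] [HasSolidNorm E] [IsOrderedAddMonoid E] [NormedSpace ℝ E]
    (f : E →L[ℝ] ℝ) : Prop :=
  ∀ x : E, 0 ≤ x → 0 ≤ f x

/-- An operator between Banach lattices is positive if it maps the positive cone into
the positive cone. -/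
def IsPositiveOp {E F : Type*} [NormedAddCommGroup E] [Lattice E] [HasSolidNorm E] [IsOrderedAddMonoid E] [NormedSpace ℝ E]
    [NormedAddCommGroup F] [Lattice F] [HasSolidNorm F] [IsOrderedAddMonoid F] [NormedSpace ℝ F] (T : E →L[ℝ] F) : Prop :=
  ∀ x : E, 0 ≤ x → 0 ≤ T x

/-- An operator `T : X → E` into a Banach lattice is almost limited if `‖T* fₙ‖ → 0` for
every disjoint weak* null sequence `(fₙ)` in `E*`. -/
def AlmostLimited {X E : Type*} [NormedAddCommGroup X] [NormedSpace ℝ X]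
    [NormedAddCommGroup E] [Lattice E] [HasSolidNorm E] [IsOrderedAddMonoid E] [NormedSpace ℝ E] (T : X →L[ℝ] E) : Prop :=
  ∀ f : ℕ → E →L[ℝ] ℝ, WeakStarNull f → Pairwise (fun n m => DualDisjoint (f n) (f m)) →
    Tendsto (fun n => ‖(f n).comp T‖) atTop (𝓝 0)

/-- A Banach lattice `E` has property (d) if `|fₙ| → 0` in the weak* topology for every
disjoint weak* null sequence `(fₙ)` in `E*` (it suffices to test `|fₙ|` on the positive cone). -/
def PropertyD (E : Type*) [NormedAddCommGroup E] [Lattice E] [HasSolidNorm E] [IsOrderedAddMonoid E] [NormedSpace ℝ E] : Prop :=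
  ∀ f : ℕ → E →L[ℝ] ℝ, WeakStarNull f → Pairwise (fun n m => DualDisjoint (f n) (f m)) →
    ∀ x : E, 0 ≤ x → Tendsto (fun n => dualAbs (f n) x) atTop (𝓝 0)

/-- A Banach lattice `E` has the dual positive Schur property if every weak* null sequence of
positive functionals is norm null. -/
def DualPositiveSchur (E : Type*) [NormedAddCommGroup E] [Lattice E] [HasSolidNorm E] [IsOrderedAddMonoid E] [NormedSpace ℝ E] : Prop :=
  ∀ f : ℕ → E →L[ℝ] ℝ, WeakStarNull f → (∀ n, PositiveFunctional (f n)) →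
    Tendsto (fun n => ‖f n‖) atTop (𝓝 0)

/-- A Banach lattice `F` has the positive Schur property if every weakly null sequence of
positive elements is norm null. -/
def PositiveSchur (F : Type*) [NormedAddCommGroup F] [Lattice F] [HasSolidNorm F] [IsOrderedAddMonoid F] [NormedSpace ℝ F] : Prop :=
  ∀ x : ℕ → F, (∀ g : F →L[ℝ] ℝ, Tendsto (fun n => g (x n)) atTop (𝓝 0)) →
    (∀ n, 0 ≤ x n) → Tendsto (fun n => ‖x n‖) atTop (𝓝 0)

/-- An operator is weakly compact if the image of the closed unit ball is relatively
compact in the weak topology. -/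
def IsWeaklyCompactOp {X Y : Type*} [NormedAddCommGroup X] [NormedSpace ℝ X]
    [NormedAddCommGroup Y] [NormedSpace ℝ Y] (T : X →L[ℝ] Y) : Prop :=
  IsCompact (closure (toWeakSpaceCLM ℝ Y '' (T '' closedBall 0 1)))

/-- A lattice is σ-Dedekind complete if every countable nonempty order-bounded subset has a
supremum. -/
def SigmaDedekindComplete (E : Type*) [Lattice E] : Prop :=
  ∀ s : Set E, s.Countable → s.Nonempty → BddAbove s → ∃ a, IsLUB s a

/-- The norm of a Banach lattice is order continuous if `x_α ↓ 0` implies `‖x_α‖ ↓ 0`,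
for every decreasing net `(x_α)` with infimum `0`. -/
def HasOrderContinuousNorm (E : Type*) [NormedAddCommGroup E] [Lattice E] [HasSolidNorm E] [IsOrderedAddMonoid E] : Prop :=
  ∀ ⦃ι : Type*⦄ [Preorder ι] [Nonempty ι] [IsDirected ι (· ≤ ·)] (x : ι → E),
    Antitone x → IsGLB (Set.range x) 0 → Tendsto (fun i => ‖x i‖) atTop (𝓝 0)

/-- A Banach space is reflexive if the canonical embedding into its double dual is
surjective. -/
def ReflexiveSpace (X : Type*) [NormedAddCommGroup X] [NormedSpace ℝ X] : Prop :=
  Function.Surjective (inclusionInDoubleDual ℝ X)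

/-- The Banach lattice `ℓ^∞` of bounded real sequences. -/
abbrev LinftySeq : Type := ℕ →ᵇ ℝ

/-!
For `(⇒)`: if `(fₙ)` is disjoint and weak* null, property (d) makes the positive functionals
`|fₙ|` weak* null, so the dual positive Schur property gives `‖fₙ‖ ≤ ‖|fₙ|‖ → 0`.

For `(⇐)`: let `(fₙ)` be positive and weak* null and choose `xₙ ≥ 0` in the unit ball with
`‖fₙ‖ ≤ 2 fₙ(xₙ)`. After passing to a subsequence along which `fₖ(xᵢ)` is tiny for `i < k`,
the standard disjointification `yₖ = (xₖ - 4ᵏ ∑_{i<k} xᵢ - 2⁻ᵏ s)⁺`, with `s = ∑ 2⁻ⁱ xᵢ`, yields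
pairwise disjoint `0 ≤ yₖ ≤ xₖ` with `fₖ(xₖ) - fₖ(yₖ) → 0`. The components
`x ↦ supₘ fₖ(x ⊓ m yₖ)` of `fₖ` in the bands generated by the `yₖ` form a disjoint weak* null
sequence, so almost limitedness of the identity makes their norms, and hence `fₖ(yₖ)`, tend to `0`.
-/

section LatticeGroup

variable {E : Type*} [AddCommGroup E] [Lattice E] [IsOrderedAddMonoid E]

theorem posPart_le_abs (a : E) : a⁺ ≤ |a| := sup_le (le_abs_self a) (abs_nonneg a)

theorem negPart_le_abs (a : E) : a⁻ ≤ |a| := sup_le (neg_le_abs a) (abs_nonneg a)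

theorem add_inf_le_add_inf {a b c : E} (ha : 0 ≤ a) (hb : 0 ≤ b) (hc : 0 ≤ c) :
    (a + b) ⊓ c ≤ a ⊓ c + b ⊓ c := by
  rw [add_inf, inf_add, inf_add]
  refine le_inf (le_inf inf_le_left ?_) (le_inf ?_ ?_)
  · exact inf_le_right.trans (le_add_of_nonneg_right hb)
  · exact inf_le_right.trans (le_add_of_nonneg_left ha)
  · exact inf_le_right.trans (le_add_of_nonneg_left hc)

theorem map_posPart_sub_map_negPart_add {p : E → ℝ}
    (hp : ∀ a b, 0 ≤ a → 0 ≤ b → p (a + b) = p a + p b) (a b : E) :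
    p (a + b)⁺ - p (a + b)⁻ = (p a⁺ - p a⁻) + (p b⁺ - p b⁻) := by
  have hsplit : (a + b)⁺ + (a⁻ + b⁻) = (a + b)⁻ + (a⁺ + b⁺) := by
    have h : (a + b)⁺ - (a + b)⁻ = (a⁺ - a⁻) + (b⁺ - b⁻) := by simp only [posPart_sub_negPart]
    rw [sub_eq_iff_eq_add] at h
    rw [h]; abel
  have h := congrArg p hsplit
  rw [hp _ _ (posPart_nonneg _) (by positivity), hp _ _ (negPart_nonneg _) (negPart_nonneg _),
    hp _ _ (negPart_nonneg _) (by positivity), hp _ _ (posPart_nonneg _) (posPart_nonneg _)] at h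
  linarith

end LatticeGroup

section VectorLattice

variable {E : Type*} [AddCommGroup E] [Lattice E] [Module ℝ E] [PosSMulMono ℝ E]

theorem smul_inf_of_nonneg {c : ℝ} (hc : 0 ≤ c) (a b : E) : c • (a ⊓ b) = c • a ⊓ c • b := by
  rcases hc.eq_or_lt with rfl | hc
  · simp
  · exact (OrderIso.smulRight hc).map_inf a b

theorem smul_posPart_of_nonneg {c : ℝ} (hc : 0 ≤ c) (a : E) : (c • a)⁺ = c • a⁺ := by
  rcases hc.eq_or_lt with rfl | hc
  · simp
  · calc (c • a)⁺ = c • a ⊔ c • 0 := by rw [posPart_def, smul_zero]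
      _ = c • a⁺ := ((OrderIso.smulRight hc).map_sup a 0).symm

theorem smul_inf_smul_eq_zero [IsOrderedAddMonoid E] {a b : E} (ha : 0 ≤ a) (hb : 0 ≤ b)
    (hab : a ⊓ b = 0) {c d : ℝ} (hc : 0 ≤ c) (hd : 0 ≤ d) : c • a ⊓ d • b = 0 := by
  refine le_antisymm ?_ (le_inf (smul_nonneg hc ha) (smul_nonneg hd hb))
  calc c • a ⊓ d • b ≤ (c + d) • a ⊓ (c + d) • b :=
        inf_le_inf (smul_le_smul_of_nonneg_right (by linarith) ha)
          (smul_le_smul_of_nonneg_right (by linarith) hb)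
    _ = 0 := by rw [← smul_inf_of_nonneg (by positivity), hab, smul_zero]

end VectorLattice

section NormedLattice

variable {E : Type*} [NormedAddCommGroup E] [Lattice E] [HasSolidNorm E] [IsOrderedAddMonoid E]

theorem norm_le_norm_of_nonneg_of_le {a b : E} (ha : 0 ≤ a) (hab : a ≤ b) : ‖a‖ ≤ ‖b‖ :=
  norm_le_norm_of_abs_le_abs (abs_le_abs_of_nonneg ha hab)

theorem norm_le_norm_of_abs_le {a b : E} (h : |a| ≤ b) : ‖a‖ ≤ ‖b‖ := by
  simpa [norm_abs_eq_norm] using norm_le_norm_of_nonneg_of_le (abs_nonneg a) h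

theorem norm_posPart_le (a : E) : ‖a⁺‖ ≤ ‖a‖ := by
  simpa [norm_abs_eq_norm] using norm_le_norm_of_nonneg_of_le (posPart_nonneg a) (posPart_le_abs a)

theorem norm_negPart_le (a : E) : ‖a⁻‖ ≤ ‖a‖ := by
  simpa [norm_abs_eq_norm] using norm_le_norm_of_nonneg_of_le (negPart_nonneg a) (negPart_le_abs a)

end NormedLattice

section PositiveFunctionals

variable {E : Type*} [NormedAddCommGroup E] [Lattice E] [IsOrderedAddMonoid E] [NormedSpace ℝ E]

theorem WeakStarNull.of_nonneg {f : ℕ → E →L[ℝ] ℝ}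
    (hf : ∀ x, 0 ≤ x → Tendsto (fun n => f n x) atTop (𝓝 0)) : WeakStarNull f := by
  intro x
  simpa [← map_sub, posPart_sub_negPart] using
    (hf x⁺ (posPart_nonneg x)).sub (hf x⁻ (negPart_nonneg x))

variable [HasSolidNorm E]

namespace PositiveFunctional

variable {F : E →L[ℝ] ℝ}

theorem mono (hF : PositiveFunctional F) {a b : E} (hab : a ≤ b) : F a ≤ F b := by
  simpa using hF (b - a) (sub_nonneg.2 hab)

theorem abs_apply_le (hF : PositiveFunctional F) (x : E) : |F x| ≤ F |x| :=
  abs_le'.2 ⟨hF.mono (le_abs_self x), by simpa using hF.mono (neg_le_abs x)⟩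

variable [PosSMulMono ℝ E]

theorem opNorm_le_of_apply_le (hF : PositiveFunctional F) {c : ℝ}
    (h : ∀ x, 0 ≤ x → ‖x‖ ≤ 1 → F x ≤ c) : ‖F‖ ≤ c := by
  have hc : 0 ≤ c := by simpa using h 0 le_rfl (by simp)
  refine F.opNorm_le_bound hc fun x => ?_
  rcases eq_or_ne x 0 with rfl | hx
  · simp
  have hx : 0 < ‖x‖ := norm_pos_iff.2 hx
  have hunit := h (‖x‖⁻¹ • |x|) (smul_nonneg (by positivity) (abs_nonneg x)) <| by
    rw [norm_smul, norm_abs_eq_norm, norm_inv, norm_norm, inv_mul_cancel₀ hx.ne']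
  rw [map_smul, smul_eq_mul, inv_mul_le_iff₀ hx] at hunit
  calc ‖F x‖ ≤ F |x| := hF.abs_apply_le x
    _ ≤ c * ‖x‖ := by linarith

theorem exists_norm_le_two_mul_apply (hF : PositiveFunctional F) :
    ∃ x, 0 ≤ x ∧ ‖x‖ ≤ 1 ∧ ‖F‖ ≤ 2 * F x := by
  by_contra! h
  have hle : ‖F‖ ≤ ‖F‖ / 2 := hF.opNorm_le_of_apply_le fun x hx hx1 => by linarith [h x hx hx1]
  have hpos : 0 < ‖F‖ := by simpa using h 0 le_rfl (by simp)
  linarith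

end PositiveFunctional

end PositiveFunctionals

section ExtensionFromCone

variable {E : Type*} [NormedAddCommGroup E] [Lattice E] [HasSolidNorm E] [IsOrderedAddMonoid E]
  [NormedSpace ℝ E]

def extendFromCone (p : E → ℝ) (hp : ∀ a b, 0 ≤ a → 0 ≤ b → p (a + b) = p a + p b)
    (C : ℝ) (hC : 0 ≤ C) (hpC : ∀ x, 0 ≤ x → |p x| ≤ C * ‖x‖) : E →L[ℝ] ℝ :=
  let q : E →+ ℝ := AddMonoidHom.mk' (fun x => p x⁺ - p x⁻) (map_posPart_sub_map_negPart_add hp)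
  q.toRealLinearMap <| AddMonoidHomClass.continuous_of_bound q (2 * C) fun x => by
    have h₁ := (hpC _ (posPart_nonneg x)).trans (mul_le_mul_of_nonneg_left (norm_posPart_le x) hC)
    have h₂ := (hpC _ (negPart_nonneg x)).trans (mul_le_mul_of_nonneg_left (norm_negPart_le x) hC)
    calc ‖q x‖ = |p x⁺ - p x⁻| := rfl
      _ ≤ |p x⁺| + |p x⁻| := abs_sub _ _
      _ ≤ 2 * C * ‖x‖ := by linarith

theorem extendFromCone_apply_of_nonneg {p : E → ℝ}
    (hp : ∀ a b, 0 ≤ a → 0 ≤ b → p (a + b) = p a + p b) {C : ℝ} (hC : 0 ≤ C)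
    (hpC : ∀ x, 0 ≤ x → |p x| ≤ C * ‖x‖) {x : E} (hx : 0 ≤ x) :
    extendFromCone p hp C hC hpC x = p x := by
  have h0 : p 0 = 0 := by simpa using hp 0 0 le_rfl le_rfl
  simp [extendFromCone, posPart_eq_self.2 hx, negPart_eq_zero.2 hx, h0]

end ExtensionFromCone

section RieszKantorovich

variable {E : Type*} [NormedAddCommGroup E] [Lattice E] [NormedSpace ℝ E]

/-- The value `f⁺ x` of the positive part of `f`, by the Riesz–Kantorovich formula. -/
def coneSup (f : E →L[ℝ] ℝ) (x : E) : ℝ := sSup (f '' Icc 0 x)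

theorem coneSup_le {f : E →L[ℝ] ℝ} {x : E} (hx : 0 ≤ x) {c : ℝ}
    (h : ∀ z ∈ Icc 0 x, f z ≤ c) : coneSup f x ≤ c :=
  csSup_le ((nonempty_Icc.2 hx).image f) (forall_mem_image.2 h)

variable [IsOrderedAddMonoid E] [HasSolidNorm E]

theorem le_coneSup (f : E →L[ℝ] ℝ) {x z : E} (hz : z ∈ Icc 0 x) : f z ≤ coneSup f x := by
  refine le_csSup ⟨‖f‖ * ‖x‖, ?_⟩ (mem_image_of_mem f hz)
  rintro _ ⟨w, ⟨hw0, hwx⟩, rfl⟩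
  exact (le_abs_self _).trans ((f.le_opNorm w).trans
    (mul_le_mul_of_nonneg_left (norm_le_norm_of_nonneg_of_le hw0 hwx) (norm_nonneg f)))

theorem coneSup_add (f : E →L[ℝ] ℝ) {x y : E} (hx : 0 ≤ x) (hy : 0 ≤ y) :
    coneSup f (x + y) = coneSup f x + coneSup f y := by
  refine le_antisymm (coneSup_le (add_nonneg hx hy) fun z ⟨hz0, hzxy⟩ => ?_) ?_
  · -- Riesz decomposition: `z = z ⊓ x + (z - z ⊓ x)` with `z - z ⊓ x ∈ [0, y]`.
    have hrest : z - z ⊓ x ≤ y := by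
      rw [sub_le_iff_le_add, add_inf]
      exact le_inf (le_add_of_nonneg_left hy) (by rwa [add_comm])
    calc f z = f (z ⊓ x) + f (z - z ⊓ x) := by rw [← map_add, add_sub_cancel]
      _ ≤ coneSup f x + coneSup f y :=
        add_le_add (le_coneSup f ⟨le_inf hz0 hx, inf_le_right⟩)
          (le_coneSup f ⟨sub_nonneg.2 inf_le_left, hrest⟩)
  · rw [← le_sub_iff_add_le]
    refine coneSup_le hx fun z₁ hz₁ => ?_
    rw [le_sub_iff_add_le', ← le_sub_iff_add_le]
    refine coneSup_le hy fun z₂ hz₂ => ?_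
    rw [le_sub_iff_add_le', ← map_add]
    exact le_coneSup f ⟨add_nonneg hz₁.1 hz₂.1, add_le_add hz₁.2 hz₂.2⟩

theorem dualAbs_bddAbove (f : E →L[ℝ] ℝ) (x : E) :
    BddAbove {r : ℝ | ∃ z : E, |z| ≤ x ∧ r = |f z|} := by
  refine ⟨‖f‖ * ‖x‖, ?_⟩
  rintro _ ⟨z, hzx, rfl⟩
  exact (f.le_opNorm z).trans
    (mul_le_mul_of_nonneg_left (norm_le_norm_of_abs_le hzx) (norm_nonneg f))

theorem abs_apply_le_dualAbs (f : E →L[ℝ] ℝ) {x z : E} (h : |z| ≤ x) : |f z| ≤ dualAbs f x :=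
  le_csSup (dualAbs_bddAbove f x) ⟨z, h, rfl⟩

theorem dualAbs_le {f : E →L[ℝ] ℝ} {x : E} (hx : 0 ≤ x) {c : ℝ}
    (h : ∀ z, |z| ≤ x → |f z| ≤ c) : dualAbs f x ≤ c :=
  csSup_le ⟨_, 0, by simpa using hx, rfl⟩ fun _ ⟨z, hzx, hr⟩ => hr ▸ h z hzx

theorem dualAbs_nonneg (f : E →L[ℝ] ℝ) {x : E} (hx : 0 ≤ x) : 0 ≤ dualAbs f x := by
  simpa using abs_apply_le_dualAbs f (z := 0) (by simpa using hx)

theorem dualAbs_le_norm_mul_norm (f : E →L[ℝ] ℝ) {x : E} (hx : 0 ≤ x) :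
    dualAbs f x ≤ ‖f‖ * ‖x‖ :=
  dualAbs_le hx fun z hzx =>
    (f.le_opNorm z).trans (mul_le_mul_of_nonneg_left (norm_le_norm_of_abs_le hzx) (norm_nonneg f))

theorem PositiveFunctional.dualAbs_eq {F : E →L[ℝ] ℝ} (hF : PositiveFunctional F) {x : E}
    (hx : 0 ≤ x) : dualAbs F x = F x := by
  refine le_antisymm (dualAbs_le hx fun z hzx => (hF.abs_apply_le z).trans (hF.mono hzx)) ?_
  simpa [abs_of_nonneg (hF x hx)] using abs_apply_le_dualAbs F (abs_of_nonneg hx).le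

theorem dualAbs_eq_coneSup_add_coneSup_neg (f : E →L[ℝ] ℝ) {x : E} (hx : 0 ≤ x) :
    dualAbs f x = coneSup f x + coneSup (-f) x := by
  refine le_antisymm (dualAbs_le hx fun z hzx => ?_) ?_
  · have hzp : z⁺ ∈ Icc 0 x := ⟨posPart_nonneg z, (posPart_le_abs z).trans hzx⟩
    have hzn : z⁻ ∈ Icc 0 x := ⟨negPart_nonneg z, (negPart_le_abs z).trans hzx⟩
    have hfz : f z = f z⁺ + (-f) z⁻ := by
      rw [_root_.neg_apply, ← sub_eq_add_neg, ← map_sub, posPart_sub_negPart]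
    have hfz' : -f z = f z⁻ + (-f) z⁺ := by
      rw [hfz, _root_.neg_apply, _root_.neg_apply]; ring
    refine abs_le.2 ⟨neg_le.1 ?_, ?_⟩
    · rw [hfz']
      exact add_le_add (le_coneSup f hzn) (le_coneSup (-f) hzp)
    · rw [hfz]
      exact add_le_add (le_coneSup f hzp) (le_coneSup (-f) hzn)
  · rw [← le_sub_iff_add_le]
    refine coneSup_le hx fun z₁ hz₁ => ?_
    rw [le_sub_iff_add_le', ← le_sub_iff_add_le]
    refine coneSup_le hx fun z₂ hz₂ => ?_
    rw [le_sub_iff_add_le]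
    have habs : |z₁ - z₂| ≤ x := abs_le'.2
      ⟨(sub_le_self _ hz₂.1).trans hz₁.2, by rw [neg_sub]; exact (sub_le_self _ hz₁.1).trans hz₂.2⟩
    calc (-f) z₂ + f z₁ = f (z₁ - z₂) := by simp [map_sub]; ring
      _ ≤ |f (z₁ - z₂)| := le_abs_self _
      _ ≤ dualAbs f x := abs_apply_le_dualAbs f habs

theorem dualAbs_add (f : E →L[ℝ] ℝ) {x y : E} (hx : 0 ≤ x) (hy : 0 ≤ y) :
    dualAbs f (x + y) = dualAbs f x + dualAbs f y := by
  simp only [dualAbs_eq_coneSup_add_coneSup_neg f, hx, hy, add_nonneg, coneSup_add]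
  ring

def dualAbsCLM (f : E →L[ℝ] ℝ) : E →L[ℝ] ℝ :=
  extendFromCone (dualAbs f) (fun _ _ => dualAbs_add f) ‖f‖ (norm_nonneg f) fun _ hx => by
    rw [abs_of_nonneg (dualAbs_nonneg f hx)]
    exact dualAbs_le_norm_mul_norm f hx

theorem dualAbsCLM_apply_of_nonneg (f : E →L[ℝ] ℝ) {x : E} (hx : 0 ≤ x) :
    dualAbsCLM f x = dualAbs f x :=
  extendFromCone_apply_of_nonneg _ _ _ hx

theorem positiveFunctional_dualAbsCLM (f : E →L[ℝ] ℝ) : PositiveFunctional (dualAbsCLM f) :=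
  fun _ hx => (dualAbsCLM_apply_of_nonneg f hx).symm ▸ dualAbs_nonneg f hx

theorem norm_le_norm_dualAbsCLM (f : E →L[ℝ] ℝ) : ‖f‖ ≤ ‖dualAbsCLM f‖ := by
  refine f.opNorm_le_bound (norm_nonneg _) fun x => ?_
  calc ‖f x‖ ≤ dualAbs f |x| := abs_apply_le_dualAbs f le_rfl
    _ = dualAbsCLM f |x| := (dualAbsCLM_apply_of_nonneg f (abs_nonneg x)).symm
    _ ≤ ‖dualAbsCLM f‖ * ‖x‖ := by
      simpa [norm_abs_eq_norm] using (le_abs_self _).trans ((dualAbsCLM f).le_opNorm |x|)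

theorem almostLimited_id_of_dualPositiveSchur (hE : PropertyD E) (hS : DualPositiveSchur E) :
    AlmostLimited (ContinuousLinearMap.id ℝ E) := by
  intro f hf hdisj
  have habs : WeakStarNull fun n => dualAbsCLM (f n) := WeakStarNull.of_nonneg fun x hx => by
    simpa only [dualAbsCLM_apply_of_nonneg _ hx] using hE f hf hdisj x hx
  refine squeeze_zero (fun n => norm_nonneg _) (fun n => ?_)
    (hS _ habs fun n => positiveFunctional_dualAbsCLM (f n))
  simpa using norm_le_norm_dualAbsCLM (f n)

end RieszKantorovich

section BandComponent

variable {E : Type*} [NormedAddCommGroup E] [Lattice E] [IsOrderedAddMonoid E] [NormedSpace ℝ E]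
  {F : E →L[ℝ] ℝ} {y : E}

/-- For positive `F`, `x` and `y`, the value at `x` of the component of `F` in the band
generated by `y`. -/
def bandSup (F : E →L[ℝ] ℝ) (y x : E) : ℝ := ⨆ m : ℕ, F (x ⊓ m • y)

theorem bandSup_eq_zero [PosSMulMono ℝ E] {y' : E} (hy : 0 ≤ y) (hy' : 0 ≤ y') (hyy' : y ⊓ y' = 0)
    {w : E} (hw : 0 ≤ w) {m : ℕ} (hwm : w ≤ m • y) : bandSup F y' w = 0 := by
  have h : ∀ n : ℕ, w ⊓ n • y' = 0 := fun n => by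
    refine le_antisymm ?_ (le_inf hw (nsmul_nonneg hy' n))
    calc w ⊓ n • y' ≤ (m : ℝ) • y ⊓ (n : ℝ) • y' := by
          simpa only [Nat.cast_smul_eq_nsmul] using inf_le_inf_right _ hwm
      _ = 0 := smul_inf_smul_eq_zero hy hy' hyy' m.cast_nonneg n.cast_nonneg
  simp [bandSup, h]

variable [HasSolidNorm E]

theorem apply_inf_le_bandSup (hF : PositiveFunctional F) (x : E) (m : ℕ) :
    F (x ⊓ m • y) ≤ bandSup F y x :=
  le_ciSup (f := fun m : ℕ => F (x ⊓ m • y))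
    ⟨F x, forall_mem_range.2 fun _ => hF.mono inf_le_left⟩ m

theorem bandSup_le (hF : PositiveFunctional F) (x : E) : bandSup F y x ≤ F x :=
  ciSup_le fun _ => hF.mono inf_le_left

theorem bandSup_nonneg (hF : PositiveFunctional F) {x : E} (hx : 0 ≤ x) : 0 ≤ bandSup F y x := by
  simpa [inf_eq_right.2 hx] using apply_inf_le_bandSup (y := y) hF x 0

theorem bandSup_eq_of_le_nsmul (hF : PositiveFunctional F) {w : E} {m : ℕ} (hwm : w ≤ m • y) :
    bandSup F y w = F w :=
  le_antisymm (bandSup_le hF w) <| by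
    simpa [inf_eq_left.2 hwm] using apply_inf_le_bandSup (y := y) hF w m

theorem bandSup_add (hF : PositiveFunctional F) (hy : 0 ≤ y) {x x' : E} (hx : 0 ≤ x)
    (hx' : 0 ≤ x') : bandSup F y (x + x') = bandSup F y x + bandSup F y x' := by
  refine le_antisymm (ciSup_le fun m => ?_) ?_
  · calc F ((x + x') ⊓ m • y) ≤ F (x ⊓ m • y + x' ⊓ m • y) :=
          hF.mono (add_inf_le_add_inf hx hx' (nsmul_nonneg hy m))
      _ ≤ bandSup F y x + bandSup F y x' := by
        rw [map_add]
        exact add_le_add (apply_inf_le_bandSup hF x m) (apply_inf_le_bandSup hF x' m)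
  · rw [← le_sub_iff_add_le]
    refine ciSup_le fun m => ?_
    rw [le_sub_iff_add_le', ← le_sub_iff_add_le]
    refine ciSup_le fun m' => ?_
    rw [le_sub_iff_add_le', ← map_add]
    refine (hF.mono (le_inf (add_le_add inf_le_left inf_le_left) ?_)).trans
      (apply_inf_le_bandSup hF _ (m + m'))
    rw [add_nsmul]
    exact add_le_add inf_le_right inf_le_right

def bandComponent (F : E →L[ℝ] ℝ) (y : E) (hF : PositiveFunctional F) (hy : 0 ≤ y) :
    E →L[ℝ] ℝ :=
  extendFromCone (bandSup F y) (fun _ _ => bandSup_add hF hy) ‖F‖ (norm_nonneg F) fun x hx => by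
    rw [abs_of_nonneg (bandSup_nonneg hF hx)]
    exact (bandSup_le hF x).trans ((le_abs_self _).trans (F.le_opNorm x))

variable (hF : PositiveFunctional F) (hy : 0 ≤ y)

theorem bandComponent_apply_of_nonneg {x : E} (hx : 0 ≤ x) :
    bandComponent F y hF hy x = bandSup F y x :=
  extendFromCone_apply_of_nonneg _ _ _ hx

theorem positiveFunctional_bandComponent : PositiveFunctional (bandComponent F y hF hy) :=
  fun _ hx => (bandComponent_apply_of_nonneg hF hy hx).symm ▸ bandSup_nonneg hF hx

theorem bandComponent_le {x : E} (hx : 0 ≤ x) : bandComponent F y hF hy x ≤ F x :=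
  (bandComponent_apply_of_nonneg hF hy hx).trans_le (bandSup_le hF x)

theorem bandComponent_apply_self : bandComponent F y hF hy y = F y :=
  (bandComponent_apply_of_nonneg hF hy hy).trans (bandSup_eq_of_le_nsmul hF (one_nsmul y).ge)

variable [PosSMulMono ℝ E]

theorem dualDisjoint_bandComponent {F' : E →L[ℝ] ℝ} {y' : E} (hF' : PositiveFunctional F')
    (hy' : 0 ≤ y') (hyy' : y ⊓ y' = 0) :
    DualDisjoint (bandComponent F y hF hy) (bandComponent F' y' hF' hy') := by
  intro x hx ε hε
  obtain ⟨m, hm⟩ : ∃ m : ℕ, bandSup F y x - ε < F (x ⊓ m • y) :=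
    exists_lt_of_lt_ciSup (sub_lt_self _ hε)
  set w := x ⊓ m • y
  have hw : 0 ≤ w := le_inf hx (nsmul_nonneg hy m)
  have hxw : 0 ≤ x - w := sub_nonneg.2 inf_le_left
  refine ⟨x - w, hxw, sub_le_self _ hw, ?_⟩
  rw [sub_sub_cancel, (positiveFunctional_bandComponent hF hy).dualAbs_eq hxw,
    (positiveFunctional_bandComponent hF' hy').dualAbs_eq hw,
    bandComponent_apply_of_nonneg hF hy hxw, bandComponent_apply_of_nonneg hF' hy' hw,
    bandSup_eq_zero hy hy' hyy' hw inf_le_right]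
  have hsplit := bandSup_add hF hy hw hxw
  rw [add_sub_cancel, bandSup_eq_of_le_nsmul hF inf_le_right] at hsplit
  linarith

end BandComponent

section Disjointify

variable {E : Type*} [AddCommGroup E] [Lattice E] [IsOrderedAddMonoid E] [Module ℝ E]
  {s : E} {ξ : ℕ → E}

def disjointify (s : E) (ξ : ℕ → E) (k : ℕ) : E :=
  (ξ k - (4 : ℝ) ^ k • ∑ i ∈ Finset.range k, ξ i - (2⁻¹ : ℝ) ^ k • s)⁺

theorem sub_disjointify_le (s : E) (ξ : ℕ → E) (k : ℕ) :
    ξ k - disjointify s ξ k ≤ (4 : ℝ) ^ k • ∑ i ∈ Finset.range k, ξ i + (2⁻¹ : ℝ) ^ k • s := by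
  rw [sub_le_comm, ← sub_sub]
  exact le_posPart _

variable [PosSMulMono ℝ E]

theorem disjointify_le (hξ : ∀ k, 0 ≤ ξ k) (hs : 0 ≤ s) (k : ℕ) : disjointify s ξ k ≤ ξ k := by
  refine (posPart_mono ?_).trans_eq (posPart_eq_self.2 (hξ k))
  exact (sub_le_self _ (smul_nonneg (by positivity) hs)).trans
    (sub_le_self _ (smul_nonneg (by positivity) (Finset.sum_nonneg fun i _ => hξ i)))

theorem disjointify_inf_eq_zero_of_lt (hξ : ∀ k, 0 ≤ ξ k) (hs : 0 ≤ s)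
    (hξs : ∀ k, ξ k ≤ (2 : ℝ) ^ k • s) {j k : ℕ} (hjk : j < k) :
    disjointify s ξ j ⊓ disjointify s ξ k = 0 := by
  set σ := ξ j - (2⁻¹ : ℝ) ^ j • s
  have hj : disjointify s ξ j ≤ σ⁺ := posPart_mono <| sub_le_sub_right
    (sub_le_self _ (smul_nonneg (by positivity) (Finset.sum_nonneg fun i _ => hξ i))) _
  have hcoeff : (2 : ℝ) ^ k ≤ 4 ^ k * 2⁻¹ ^ j := by
    rw [inv_pow, ← div_eq_mul_inv, le_div_iff₀ (by positivity), ← pow_add,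
      show (4 : ℝ) = 2 ^ 2 by norm_num, ← pow_mul]
    exact pow_le_pow_right₀ one_le_two (by omega)
  have hk : disjointify s ξ k ≤ (4 : ℝ) ^ k • σ⁻ := by
    rw [← posPart_neg, ← smul_posPart_of_nonneg (by positivity)]
    refine posPart_mono ?_
    calc ξ k - (4 : ℝ) ^ k • ∑ i ∈ Finset.range k, ξ i - (2⁻¹ : ℝ) ^ k • s
        ≤ ξ k - (4 : ℝ) ^ k • ξ j :=
          (sub_le_self _ (smul_nonneg (by positivity) hs)).trans <| sub_le_sub_left
            (smul_le_smul_of_nonneg_left (Finset.single_le_sum (fun i _ => hξ i)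
              (Finset.mem_range.2 hjk)) (by positivity)) _
      _ ≤ (4 ^ k * 2⁻¹ ^ j : ℝ) • s - (4 : ℝ) ^ k • ξ j :=
          sub_le_sub_right ((hξs k).trans (smul_le_smul_of_nonneg_right hcoeff hs)) _
      _ = (4 : ℝ) ^ k • -σ := by rw [smul_neg, smul_sub, mul_smul, neg_sub]
  refine le_antisymm ?_ (le_inf (posPart_nonneg _) (posPart_nonneg _))
  calc disjointify s ξ j ⊓ disjointify s ξ k ≤ (1 : ℝ) • σ⁺ ⊓ (4 : ℝ) ^ k • σ⁻ := by
        rw [one_smul]; exact inf_le_inf hj hk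
    _ = 0 := smul_inf_smul_eq_zero (posPart_nonneg σ) (negPart_nonneg σ)
        (posPart_inf_negPart_eq_zero σ) zero_le_one (by positivity)

theorem pairwise_disjointify_inf_eq_zero (hξ : ∀ k, 0 ≤ ξ k) (hs : 0 ≤ s)
    (hξs : ∀ k, ξ k ≤ (2 : ℝ) ^ k • s) :
    Pairwise fun j k => disjointify s ξ j ⊓ disjointify s ξ k = 0 := fun _ _ hjk =>
  hjk.lt_or_gt.elim (disjointify_inf_eq_zero_of_lt hξ hs hξs) fun hkj =>
    (inf_comm _ _).trans (disjointify_inf_eq_zero_of_lt hξ hs hξs hkj)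

end Disjointify

theorem exists_strictMono_apply_lt_of_tendsto_zero {u : ℕ → ℕ → ℝ}
    (hu : ∀ j, Tendsto (fun m => u m j) atTop (𝓝 0)) {δ : ℕ → ℝ} (hδ : ∀ k, 0 < δ k) :
    ∃ a : ℕ → ℕ, StrictMono a ∧ ∀ k i, i < k → u (a k) (a i) < δ k := by
  have hnext : ∀ k N, ∃ m, N < m ∧ ∀ j ≤ N, u m j < δ (k + 1) := fun k N => by
    have hsmall : ∀ᶠ m in atTop, ∀ j ∈ Iic N, u m j < δ (k + 1) :=
      (eventually_all_finite (finite_Iic N)).2 fun j _ => (hu j).eventually (gt_mem_nhds (hδ _))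
    obtain ⟨m, hm, hNm⟩ := (hsmall.and (eventually_gt_atTop N)).exists
    exact ⟨m, hNm, hm⟩
  choose next hnext_gt hnext_lt using hnext
  let a : ℕ → ℕ := fun k => Nat.rec 0 next k
  have ha : StrictMono a := strictMono_nat_of_lt_succ fun k => hnext_gt k (a k)
  refine ⟨a, ha, fun k i hik => ?_⟩
  cases k with
  | zero => omega
  | succ k => exact hnext_lt k (a k) (a i) (ha.monotone (Nat.lt_succ_iff.1 hik))

section Backward

variable {E : Type*} [NormedAddCommGroup E] [Lattice E] [HasSolidNorm E] [IsOrderedAddMonoid E]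
  [NormedSpace ℝ E] [PosSMulMono ℝ E]

theorem exists_nonneg_forall_le_two_pow_smul [CompleteSpace E] {ξ : ℕ → E} (hξ : ∀ k, 0 ≤ ξ k)
    {C : ℝ} (hξC : ∀ k, ‖ξ k‖ ≤ C) : ∃ s, 0 ≤ s ∧ ∀ k, ξ k ≤ (2 : ℝ) ^ k • s := by
  have hsum : Summable fun i => (2⁻¹ : ℝ) ^ i • ξ i := by
    refine .of_norm_bounded ((summable_geometric_of_lt_one (by norm_num)
      (by norm_num : (2⁻¹ : ℝ) < 1)).mul_right C) fun i => ?_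
    rw [norm_smul, norm_pow, norm_inv, Real.norm_ofNat]
    exact mul_le_mul_of_nonneg_left (hξC i) (by positivity)
  refine ⟨∑' i, (2⁻¹ : ℝ) ^ i • ξ i, tsum_nonneg fun i => smul_nonneg (by positivity) (hξ i),
    fun k => ?_⟩
  calc ξ k = (2 : ℝ) ^ k • (2⁻¹ : ℝ) ^ k • ξ k := by rw [smul_smul, ← mul_pow]; norm_num
    _ ≤ (2 : ℝ) ^ k • ∑' i, (2⁻¹ : ℝ) ^ i • ξ i :=
      smul_le_smul_of_nonneg_left (hsum.le_tsum k fun j _ => smul_nonneg (by positivity) (hξ j))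
        (by positivity)

theorem AlmostLimited.tendsto_apply_of_pairwise_inf_eq_zero
    (hAL : AlmostLimited (ContinuousLinearMap.id ℝ E)) {F : ℕ → E →L[ℝ] ℝ} (hF : WeakStarNull F)
    (hFpos : ∀ n, PositiveFunctional (F n)) {y : ℕ → E} (hy0 : ∀ n, 0 ≤ y n)
    (hy1 : ∀ n, ‖y n‖ ≤ 1) (hdisj : Pairwise fun m n => y m ⊓ y n = 0) :
    Tendsto (fun n => F n (y n)) atTop (𝓝 0) := by
  set G := fun n => bandComponent (F n) (y n) (hFpos n) (hy0 n)
  have hG : WeakStarNull G := WeakStarNull.of_nonneg fun x hx =>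
    squeeze_zero (fun n => positiveFunctional_bandComponent _ _ x hx)
      (fun n => bandComponent_le _ _ hx) (hF x)
  have hGnorm : Tendsto (fun n => ‖G n‖) atTop (𝓝 0) := by
    simpa using hAL G hG fun m n hmn => dualDisjoint_bandComponent _ _ _ _ (hdisj hmn)
  refine squeeze_zero (fun n => hFpos n _ (hy0 n)) (fun n => ?_) hGnorm
  calc F n (y n) = G n (y n) := (bandComponent_apply_self _ _).symm
    _ ≤ ‖G n‖ * ‖y n‖ := (le_abs_self _).trans ((G n).le_opNorm _)
    _ ≤ ‖G n‖ := mul_le_of_le_one_right (norm_nonneg _) (hy1 n)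

theorem AlmostLimited.tendsto_apply_of_apply_le_inv_eight_pow [CompleteSpace E]
    (hAL : AlmostLimited (ContinuousLinearMap.id ℝ E)) {G : ℕ → E →L[ℝ] ℝ} (hG : WeakStarNull G)
    (hGpos : ∀ k, PositiveFunctional (G k)) {ξ : ℕ → E} (hξ0 : ∀ k, 0 ≤ ξ k)
    (hξ1 : ∀ k, ‖ξ k‖ ≤ 1) (hsmall : ∀ k i, i < k → G k (ξ i) ≤ 8⁻¹ ^ k) :
    Tendsto (fun k => G k (ξ k)) atTop (𝓝 0) := by
  obtain ⟨s, hs, hξs⟩ := exists_nonneg_forall_le_two_pow_smul hξ0 hξ1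
  have hy := hAL.tendsto_apply_of_pairwise_inf_eq_zero (y := disjointify s ξ) hG hGpos
    (fun _ => posPart_nonneg _)
    (fun k => (norm_le_norm_of_nonneg_of_le (posPart_nonneg _) (disjointify_le hξ0 hs k)).trans
      (hξ1 k))
    (pairwise_disjointify_inf_eq_zero hξ0 hs hξs)
  have hbound : ∀ k : ℕ, G k (ξ k) ≤ G k (disjointify s ξ k) + (k * 2⁻¹ ^ k + G k s) := by
    intro k
    have h := (hGpos k).mono (sub_disjointify_le s ξ k)
    rw [map_sub, map_add, map_smul, map_smul, map_sum, smul_eq_mul, smul_eq_mul] at h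
    have hsum : ∑ i ∈ Finset.range k, G k (ξ i) ≤ k * 8⁻¹ ^ k := by
      simpa using Finset.sum_le_card_nsmul _ _ _ fun i hi => hsmall k i (Finset.mem_range.1 hi)
    have hs' : (2⁻¹ : ℝ) ^ k * G k s ≤ G k s :=
      mul_le_of_le_one_left (hGpos k s hs) (pow_le_one₀ (by norm_num) (by norm_num))
    have h48 : (4 : ℝ) ^ k * (k * 8⁻¹ ^ k) = k * 2⁻¹ ^ k := by
      rw [mul_left_comm, ← mul_pow]; norm_num
    calc G k (ξ k) ≤ G k (disjointify s ξ k) +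
          ((4 : ℝ) ^ k * ∑ i ∈ Finset.range k, G k (ξ i) + 2⁻¹ ^ k * G k s) := by linarith
      _ ≤ G k (disjointify s ξ k) + ((4 : ℝ) ^ k * (k * 8⁻¹ ^ k) + G k s) :=
        add_le_add_right (add_le_add (mul_le_mul_of_nonneg_left hsum (by positivity)) hs') _
      _ = G k (disjointify s ξ k) + (k * 2⁻¹ ^ k + G k s) := by rw [h48]
  have hlim : Tendsto (fun k : ℕ => G k (disjointify s ξ k) + (k * 2⁻¹ ^ k + G k s)) atTop
      (𝓝 0) := by
    simpa using hy.add
      ((tendsto_self_mul_const_pow_of_lt_one (r := 2⁻¹) (by norm_num) (by norm_num)).add (hG s))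
  exact squeeze_zero (fun k => hGpos k _ (hξ0 k)) hbound hlim

theorem dualPositiveSchur_of_almostLimited_id [CompleteSpace E]
    (hAL : AlmostLimited (ContinuousLinearMap.id ℝ E)) : DualPositiveSchur E := by
  intro f hf hfpos
  refine tendsto_of_subseq_tendsto fun ns hns => ?_
  choose x hx0 hx1 hfx using fun n => (hfpos (ns n)).exists_norm_le_two_mul_apply
  obtain ⟨a, ha, hsmall⟩ := exists_strictMono_apply_lt_of_tendsto_zero
    (u := fun m j => f (ns m) (x j)) (fun j => (hf (x j)).comp hns) (δ := fun k => 8⁻¹ ^ k)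
    fun k => by positivity
  refine ⟨a, squeeze_zero (fun k => norm_nonneg _) (fun k => hfx (a k)) ?_⟩
  simpa using (hAL.tendsto_apply_of_apply_le_inv_eight_pow (G := fun k => f (ns (a k)))
    (fun y => (hf y).comp (hns.comp ha.tendsto_atTop)) (fun k => hfpos _) (fun k => hx0 (a k))
    (fun k => hx1 (a k)) fun k i hik => (hsmall k i hik).le).const_mul 2

end Backward

/-- A Banach lattice with property (d) has the dual positive Schur property iff
its identity operator is almost limited. -/
theorem dualPositiveSchur_iff_id_almostLimited
    {E : Type*} [NormedAddCommGroup E] [Lattice E] [HasSolidNorm E] [IsOrderedAddMonoid E] [NormedSpace ℝ E] [PosSMulStrictMono ℝ E]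
    [CompleteSpace E] (hE : PropertyD E) :
    DualPositiveSchur E ↔ AlmostLimited (ContinuousLinearMap.id ℝ E) :=
  ⟨almostLimited_id_of_dualPositiveSchur hE, dualPositiveSchur_of_almostLimited_id⟩
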